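/- arXiv:math/0401389 — 2 statements merged into one kernel-verified Lean document; each statement's English description precedes it below -/
import Mathlib

section
/- For every fixed s ∈ (0,1], the sequence (β_n(s))_{n ≥ 0} is non-increasing in n: β_{n+1}(s) ≤ β_n(s) for all n ≥ 0. -/
open MeasureTheory Real Set Filter

/-- The recursively defined sequence of functions `β_n`:
`β₀(s) = 1 - s` and `β_n(s) = ∫_s^1 (1/w)(1 - e^{-β_{n-1}(1-w)}) dw`. -/
noncomputable def beta : ℕ → ℝ → ℝ
  | 0, s => 1 - s
  | n + 1, s => ∫ w in Set.Ioc s 1, (1 / w) * (1 - Real.exp (-(beta n (1 - w))))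

/-!
`β_{n+1} = T β_n` for the operator `T f (s) = ∫_s^1 (1/w)(1 - e^{-f(1-w)}) dw`, which is monotone
and maps the class of measurable `f` with `0 ≤ f(x) ≤ 1 - x` on `[0,1]` into itself: the bound
`1 - e^{-b} ≤ b ≤ w` keeps the integrand in `[0,1]`. Since `β₁ ≤ 1 - s = β₀`, applying `T`
repeatedly gives `β_{n+1} ≤ β_n`.
-/

noncomputable def betaStep (f : ℝ → ℝ) (s : ℝ) : ℝ :=
  ∫ w in Ioc s 1, (1 / w) * (1 - exp (-(f (1 - w))))

lemma beta_succ (n : ℕ) : beta (n + 1) = betaStep (beta n) := rfl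

lemma one_div_mul_one_sub_exp_neg_mem_Icc {b w : ℝ} (hw : 0 < w) (hb : 0 ≤ b) (hbw : b ≤ w) :
    (1 / w) * (1 - exp (-b)) ∈ Icc 0 1 := by
  have hexp : exp (-b) ≤ 1 := exp_le_one_iff.mpr (neg_nonpos.mpr hb)
  have hlin : 1 - exp (-b) ≤ b := by linarith [add_one_le_exp (-b)]
  refine ⟨by positivity, ?_⟩
  calc (1 / w) * (1 - exp (-b)) ≤ (1 / w) * w := by gcongr; linarith
    _ = 1 := one_div_mul_cancel hw.ne'

lemma measurable_setIntegral_Ioc {g : ℝ → ℝ} (hg : Measurable g) (b : ℝ) :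
    Measurable fun s => ∫ w in Ioc s b, g w := by
  have hset : MeasurableSet {p : ℝ × ℝ | p.2 ∈ Ioc p.1 b} :=
    (measurableSet_lt measurable_fst measurable_snd).inter
      (measurableSet_le measurable_snd measurable_const)
  have hF : Measurable fun p : ℝ × ℝ => (Ioc p.1 b).indicator g p.2 :=
    Measurable.ite hset (hg.comp measurable_snd) measurable_const
  simp_rw [← integral_indicator measurableSet_Ioc]
  exact hF.stronglyMeasurable.integral_prod_right'.measurable

section betaStep

variable {f g : ℝ → ℝ}

lemma measurable_betaStep_integrand (hf : Measurable f) :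
    Measurable fun w => (1 / w) * (1 - exp (-(f (1 - w)))) := by
  fun_prop

lemma measurable_betaStep (hf : Measurable f) : Measurable (betaStep f) :=
  measurable_setIntegral_Ioc (measurable_betaStep_integrand hf) 1

lemma betaStep_integrand_mem_Icc (hf0 : ∀ x ∈ Icc (0 : ℝ) 1, 0 ≤ f x)
    (hf1 : ∀ x ∈ Icc (0 : ℝ) 1, f x ≤ 1 - x) {s w : ℝ} (hs : 0 ≤ s) (hw : w ∈ Ioc s 1) :
    (1 / w) * (1 - exp (-(f (1 - w)))) ∈ Icc 0 1 := by
  have hx : 1 - w ∈ Icc (0 : ℝ) 1 := ⟨by linarith [hw.2], by linarith [hw.1]⟩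
  exact one_div_mul_one_sub_exp_neg_mem_Icc (hs.trans_lt hw.1) (hf0 _ hx)
    (by linarith [hf1 _ hx])

lemma betaStep_nonneg (hf0 : ∀ x ∈ Icc (0 : ℝ) 1, 0 ≤ f x)
    (hf1 : ∀ x ∈ Icc (0 : ℝ) 1, f x ≤ 1 - x) {s : ℝ} (hs : 0 ≤ s) : 0 ≤ betaStep f s :=
  setIntegral_nonneg measurableSet_Ioc fun _ hw => (betaStep_integrand_mem_Icc hf0 hf1 hs hw).1

lemma betaStep_le_one_sub (hf0 : ∀ x ∈ Icc (0 : ℝ) 1, 0 ≤ f x)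
    (hf1 : ∀ x ∈ Icc (0 : ℝ) 1, f x ≤ 1 - x) {s : ℝ} (hs : s ∈ Icc (0 : ℝ) 1) :
    betaStep f s ≤ 1 - s := by
  calc betaStep f s ≤ ∫ _ in Ioc s 1, (1 : ℝ) := by
        refine integral_mono_of_nonneg ?_ (integrableOn_const measure_Ioc_lt_top.ne) ?_ <;>
        filter_upwards [ae_restrict_mem measurableSet_Ioc] with w hw
        exacts [(betaStep_integrand_mem_Icc hf0 hf1 hs.1 hw).1,
          (betaStep_integrand_mem_Icc hf0 hf1 hs.1 hw).2]
    _ = 1 - s := by simp [hs.2]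

lemma betaStep_mono (hf0 : ∀ x ∈ Icc (0 : ℝ) 1, 0 ≤ f x)
    (hg : Measurable g) (hg0 : ∀ x ∈ Icc (0 : ℝ) 1, 0 ≤ g x)
    (hg1 : ∀ x ∈ Icc (0 : ℝ) 1, g x ≤ 1 - x) (hfg : ∀ x ∈ Icc (0 : ℝ) 1, f x ≤ g x)
    {s : ℝ} (hs : 0 ≤ s) : betaStep f s ≤ betaStep g s := by
  have hint : IntegrableOn (fun w => (1 / w) * (1 - exp (-(g (1 - w))))) (Ioc s 1) := by
    refine Measure.integrableOn_of_bounded (M := 1) measure_Ioc_lt_top.ne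
      (measurable_betaStep_integrand hg).aestronglyMeasurable ?_
    filter_upwards [ae_restrict_mem measurableSet_Ioc] with w hw
    have := betaStep_integrand_mem_Icc hg0 hg1 hs hw
    rw [norm_of_nonneg this.1]
    exact this.2
  refine integral_mono_of_nonneg ?_ hint ?_ <;>
  filter_upwards [ae_restrict_mem measurableSet_Ioc] with w hw
  · have hx : 1 - w ∈ Icc (0 : ℝ) 1 := ⟨by linarith [hw.2], by linarith [hw.1]⟩
    have : exp (-(f (1 - w))) ≤ 1 := exp_le_one_iff.mpr (neg_nonpos.mpr (hf0 _ hx))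
    have : 0 < w := hs.trans_lt hw.1
    simp only [Pi.zero_apply]
    positivity
  · have hx : 1 - w ∈ Icc (0 : ℝ) 1 := ⟨by linarith [hw.2], by linarith [hw.1]⟩
    have : 0 < w := hs.trans_lt hw.1
    gcongr
    exact hfg _ hx

end betaStep

lemma measurable_beta (n : ℕ) : Measurable (beta n) := by
  induction n with
  | zero => exact measurable_const.sub measurable_id
  | succ n ih => exact measurable_betaStep ih

lemma beta_mem_Icc (n : ℕ) {s : ℝ} (hs : s ∈ Icc (0 : ℝ) 1) : beta n s ∈ Icc 0 (1 - s) := by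
  induction n generalizing s with
  | zero => exact ⟨by simp [beta, hs.2], le_rfl⟩
  | succ n ih =>
    exact ⟨betaStep_nonneg (fun x hx => (ih hx).1) (fun x hx => (ih hx).2) hs.1,
      betaStep_le_one_sub (fun x hx => (ih hx).1) (fun x hx => (ih hx).2) hs⟩

lemma beta_succ_le (n : ℕ) {s : ℝ} (hs : s ∈ Icc (0 : ℝ) 1) : beta (n + 1) s ≤ beta n s := by
  induction n generalizing s with
  | zero => exact (beta_mem_Icc 1 hs).2
  | succ n ih =>
    rw [beta_succ (n + 1), beta_succ n]
    exact betaStep_mono (fun x hx => (beta_mem_Icc _ hx).1) (measurable_beta n)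
      (fun x hx => (beta_mem_Icc _ hx).1) (fun x hx => (beta_mem_Icc _ hx).2) (fun x hx => ih hx)
      hs.1

/-- For every fixed `s ∈ (0,1]`, the sequence `(β_n(s))_{n ≥ 0}`
is non-increasing in `n`. -/
theorem stmt6 (s : ℝ) (hs : s ∈ Set.Ioc (0:ℝ) 1) (n : ℕ) :
    beta (n + 1) s ≤ beta n s :=
  beta_succ_le n (Ioc_subset_Icc_self hs)
end

section
/- With f₀ := H̄² and f_n := T(f_{n−1}) for n ≥ 1, the sequence f_n converges pointwise to H̄: for every x ∈ ℝ, lim_{n → ∞} f_n(x) = H̄(x). -/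
open MeasureTheory Real Set Filter

/-- The Logistic distribution function `H(x) = 1/(1+e^{-x})`. -/
noncomputable def H (x : ℝ) : ℝ := 1 / (1 + Real.exp (-x))

/-- The tail `H̄ := 1 - H` of the Logistic distribution function. -/
noncomputable def Hbar (x : ℝ) : ℝ := 1 - H x

/-- The set 𝔉 of continuous, non-increasing functions `f : ℝ → [0,1]`
with `H̄(x)² ≤ f(x) ≤ H̄(x)` for all `x`. -/
def memF (f : ℝ → ℝ) : Prop :=
  (∀ x, f x ∈ Set.Icc (0:ℝ) 1) ∧ Continuous f ∧ Antitone f ∧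
    ∀ x, Hbar x ^ 2 ≤ f x ∧ f x ≤ Hbar x

/-- The operator `T(f)(x) := H̄(x)² · exp(∫_{-x}^∞ f(s) ds)`. -/
noncomputable def T (f : ℝ → ℝ) (x : ℝ) : ℝ :=
  Hbar x ^ 2 * Real.exp (∫ s in Set.Ioi (-x), f s)

/-- The iterates `f₀ := H̄²`, `f_n := T(f_{n-1})`. -/
noncomputable def fseq : ℕ → ℝ → ℝ
  | 0 => fun x => Hbar x ^ 2
  | n + 1 => T (fseq n)

/-!
`T` fixes `H̄`, because `∫_{-x}^∞ H̄ = -log H̄(x)`; hence `T f = H̄ · exp (-J_f)` with the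
gap `J_f(x) = ∫_{-x}^∞ (H̄ - f) ≥ 0`. If `J_f ≤ c H`, then pointwise
`H̄ - T f ≤ H̄ (1 - e^{-cH}) ≤ c H H̄ - (c²/4) H² H̄`, and integrating (`(H²/2)' = H² H̄`,
`H' = H H̄`) gives `J_{T f} ≤ (c - c²/8) H`. Starting from `J_{f₀} = H`, this yields
`J_{f_n} ≤ 8/(n+8) · H`, and `H̄ - f_{n+1} ≤ J_{f_n}` squeezes `f_n` to `H̄`.
-/

open Topology

lemma H_eq_inv : H = (fun x => 1 + exp (-x))⁻¹ := funext fun _ => one_div _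

lemma Hbar_eq_H_neg (x : ℝ) : Hbar x = H (-x) := by
  have : 1 + exp (-x) ≠ 0 := by positivity
  rw [Hbar, H, H, neg_neg, exp_neg]
  field_simp
  ring

lemma H_pos (x : ℝ) : 0 < H x := by
  rw [H]; positivity

lemma H_lt_one (x : ℝ) : H x < 1 := by
  have := H_pos (-x)
  rw [← Hbar_eq_H_neg, Hbar] at this
  linarith

lemma Hbar_pos (x : ℝ) : 0 < Hbar x := Hbar_eq_H_neg x ▸ H_pos (-x)

lemma Hbar_lt_one (x : ℝ) : Hbar x < 1 := Hbar_eq_H_neg x ▸ H_lt_one (-x)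

lemma hasDerivAt_H (x : ℝ) : HasDerivAt H (H x * Hbar x) x := by
  have : 1 + exp (-x) ≠ 0 := by positivity
  have h := ((hasDerivAt_neg x).exp.const_add 1).inv this
  rw [← H_eq_inv] at h
  refine h.congr_deriv ?_
  rw [Hbar, H]
  field_simp
  ring

lemma continuous_H : Continuous H :=
  continuous_iff_continuousAt.2 fun x => (hasDerivAt_H x).continuousAt

lemma continuous_Hbar : Continuous Hbar := continuous_const.sub continuous_H

lemma tendsto_H_atTop : Tendsto H atTop (𝓝 1) := by
  have h : Tendsto (fun x => 1 + exp (-x)) atTop (𝓝 1) := by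
    simpa using tendsto_const_nhds.add (tendsto_exp_atBot.comp tendsto_neg_atTop_atBot)
  simpa [H_eq_inv, Pi.inv_def] using h.inv₀ one_ne_zero

lemma Hbar_le_exp_neg (x : ℝ) : Hbar x ≤ exp (-x) := by
  rw [Hbar_eq_H_neg, H, neg_neg, exp_neg, one_div]
  gcongr
  linarith

lemma integrableOn_Hbar (a : ℝ) : IntegrableOn Hbar (Ioi a) :=
  (exp_neg_integrableOn_Ioi a one_pos).mono' continuous_Hbar.aestronglyMeasurable
    (ae_of_all _ fun x => by simpa [abs_of_pos (Hbar_pos x)] using Hbar_le_exp_neg x)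

lemma integrableOn_of_nonneg_of_le_Hbar {f : ℝ → ℝ} (hf : AEStronglyMeasurable f)
    (h₀ : ∀ x, 0 ≤ f x) (h₁ : ∀ x, f x ≤ Hbar x) (a : ℝ) : IntegrableOn f (Ioi a) :=
  (integrableOn_Hbar a).mono' hf.restrict
    (ae_of_all _ fun x => by simpa [abs_of_nonneg (h₀ x)] using h₁ x)

lemma integrableOn_H_mul_Hbar (a : ℝ) : IntegrableOn (fun s => H s * Hbar s) (Ioi a) :=
  integrableOn_of_nonneg_of_le_Hbar (continuous_H.mul continuous_Hbar).aestronglyMeasurable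
    (fun s => (mul_pos (H_pos s) (Hbar_pos s)).le)
    (fun s => mul_le_of_le_one_left (Hbar_pos s).le (H_lt_one s).le) a

lemma integrableOn_H_sq_mul_Hbar (a : ℝ) : IntegrableOn (fun s => H s ^ 2 * Hbar s) (Ioi a) :=
  integrableOn_of_nonneg_of_le_Hbar
    ((continuous_H.pow 2).mul continuous_Hbar).aestronglyMeasurable
    (fun s => mul_nonneg (sq_nonneg _) (Hbar_pos s).le)
    (fun s => mul_le_of_le_one_left (Hbar_pos s).le
      (pow_le_one₀ (H_pos s).le (H_lt_one s).le)) a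

lemma integral_Ioi_Hbar (x : ℝ) : ∫ s in Ioi (-x), Hbar s = -log (Hbar x) := by
  have h := integral_Ioi_of_hasDerivAt_of_tendsto' (a := -x) (m := 0)
    (fun s _ => (hasDerivAt_H s).log (H_pos s).ne') ?_ ?_
  · simpa [(H_pos _).ne', Hbar_eq_H_neg] using h
  · simpa [(H_pos _).ne'] using integrableOn_Hbar (-x)
  · rw [← log_one]
    exact (continuousAt_log one_ne_zero).tendsto.comp tendsto_H_atTop

lemma integral_Ioi_H_mul_Hbar (x : ℝ) : ∫ s in Ioi (-x), H s * Hbar s = H x := by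
  have h := integral_Ioi_of_hasDerivAt_of_tendsto' (fun s _ => hasDerivAt_H s)
    (integrableOn_H_mul_Hbar (-x)) tendsto_H_atTop
  rw [h, ← Hbar_eq_H_neg, Hbar]
  ring

lemma integral_Ioi_H_sq_mul_Hbar (x : ℝ) :
    ∫ s in Ioi (-x), H s ^ 2 * Hbar s = (1 - Hbar x ^ 2) / 2 := by
  have h := integral_Ioi_of_hasDerivAt_of_tendsto' (f' := fun s => H s ^ 2 * Hbar s) (a := -x)
    (fun s _ => (((hasDerivAt_H s).pow 2).div_const 2).congr_deriv
      (by simp only [Nat.cast_ofNat, Nat.add_one_sub_one, pow_one]; ring))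
    (integrableOn_H_sq_mul_Hbar (-x))
    ((tendsto_H_atTop.pow 2).div_const 2)
  rw [h, Pi.pow_apply, ← Hbar_eq_H_neg]
  ring

lemma one_sub_exp_neg_le {t : ℝ} (ht : t ≤ 2) : 1 - exp (-t) ≤ t - t ^ 2 / 4 := by
  have h := one_sub_div_pow_le_exp_neg (n := 2) (by exact_mod_cast ht)
  push_cast at h
  nlinarith

noncomputable def gap (f : ℝ → ℝ) (x : ℝ) : ℝ := ∫ s in Ioi (-x), (Hbar s - f s)

lemma T_eq_Hbar_mul_exp_neg_gap {f : ℝ → ℝ} {x : ℝ} (hf : IntegrableOn f (Ioi (-x))) :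
    T f x = Hbar x * exp (-gap f x) := by
  rw [T, gap, integral_sub (integrableOn_Hbar _) hf, integral_Ioi_Hbar, neg_sub, sub_neg_eq_add,
    exp_add, exp_log (Hbar_pos x)]
  ring

structure Admissible (f : ℝ → ℝ) : Prop where
  measurable : Measurable f
  nonneg : ∀ x, 0 ≤ f x
  le_Hbar : ∀ x, f x ≤ Hbar x

namespace Admissible

variable {f : ℝ → ℝ}

lemma integrableOn (hf : Admissible f) (a : ℝ) : IntegrableOn f (Ioi a) :=
  integrableOn_of_nonneg_of_le_Hbar hf.measurable.aestronglyMeasurable hf.nonneg hf.le_Hbar a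

lemma gap_nonneg (hf : Admissible f) (x : ℝ) : 0 ≤ gap f x :=
  setIntegral_nonneg measurableSet_Ioi fun s _ => sub_nonneg.2 (hf.le_Hbar s)

lemma Hbar_sub_T (hf : Admissible f) (x : ℝ) :
    Hbar x - T f x = Hbar x * (1 - exp (-gap f x)) := by
  rw [T_eq_Hbar_mul_exp_neg_gap (hf.integrableOn _)]
  ring

end Admissible

lemma admissible_T {f : ℝ → ℝ} (hf : Admissible f) : Admissible (T f) where
  measurable := by
    have hmono : Monotone fun x => ∫ s in Ioi (-x), f s := fun x y hxy =>
      setIntegral_mono_set (hf.integrableOn _) (ae_of_all _ hf.nonneg)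
        (Ioi_subset_Ioi (neg_le_neg hxy)).eventuallyLE
    exact (continuous_Hbar.measurable.pow_const 2).mul (measurable_exp.comp hmono.measurable)
  nonneg x := by
    rw [T]
    positivity
  le_Hbar x := by
    have h := hf.Hbar_sub_T x
    have := exp_le_one_iff.2 (neg_nonpos.2 (hf.gap_nonneg x))
    nlinarith [Hbar_pos x]

lemma Admissible.gap_T_le {f : ℝ → ℝ} (hf : Admissible f) {c : ℝ} (hc : c ≤ 2)
    (hgap : ∀ x, gap f x ≤ c * H x) (x : ℝ) : gap (T f) x ≤ (c - c ^ 2 / 8) * H x := by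
  have hpoint (s : ℝ) :
      Hbar s - T f s ≤ c * (H s * Hbar s) - c ^ 2 / 4 * (H s ^ 2 * Hbar s) := by
    have hcH : c * H s ≤ 2 := by nlinarith [H_pos s, H_lt_one s]
    calc Hbar s - T f s = Hbar s * (1 - exp (-gap f s)) := hf.Hbar_sub_T s
      _ ≤ Hbar s * (1 - exp (-(c * H s))) :=
        mul_le_mul_of_nonneg_left (by gcongr; exact hgap s) (Hbar_pos s).le
      _ ≤ Hbar s * (c * H s - (c * H s) ^ 2 / 4) :=
        mul_le_mul_of_nonneg_left (one_sub_exp_neg_le hcH) (Hbar_pos s).le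
      _ = c * (H s * Hbar s) - c ^ 2 / 4 * (H s ^ 2 * Hbar s) := by ring
  have hHH := (integrableOn_H_mul_Hbar (-x)).const_mul c
  have hHHH := (integrableOn_H_sq_mul_Hbar (-x)).const_mul (c ^ 2 / 4)
  calc gap (T f) x
      ≤ ∫ s in Ioi (-x), (c * (H s * Hbar s) - c ^ 2 / 4 * (H s ^ 2 * Hbar s)) :=
        setIntegral_mono_on ((integrableOn_Hbar _).sub ((admissible_T hf).integrableOn _))
          (hHH.sub' hHHH) measurableSet_Ioi fun s _ => hpoint s
    _ = c * H x - c ^ 2 / 4 * ((1 - Hbar x ^ 2) / 2) := by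
        rw [integral_sub hHH hHHH, integral_const_mul, integral_const_mul,
          integral_Ioi_H_mul_Hbar, integral_Ioi_H_sq_mul_Hbar]
    _ ≤ (c - c ^ 2 / 8) * H x := by
        have : H x ≤ 1 - Hbar x ^ 2 := by
          rw [Hbar]
          nlinarith [H_pos x, H_lt_one x]
        nlinarith [sq_nonneg c]

lemma admissible_fseq (n : ℕ) : Admissible (fseq n) := by
  induction n with
  | zero =>
    exact ⟨continuous_Hbar.measurable.pow_const 2, fun x => sq_nonneg _,
      fun x => pow_le_of_le_one (Hbar_pos x).le (Hbar_lt_one x).le two_ne_zero⟩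
  | succ n ih => exact admissible_T ih

lemma gap_fseq_le (n : ℕ) (x : ℝ) : gap (fseq n) x ≤ 8 / (n + 8) * H x := by
  induction n generalizing x with
  | zero =>
    have : gap (fseq 0) x = H x := by
      rw [← integral_Ioi_H_mul_Hbar]
      refine setIntegral_congr_fun measurableSet_Ioi fun s _ => ?_
      simp only [fseq, Hbar]
      ring
    simp [this]
  | succ n ih =>
    refine ((admissible_fseq n).gap_T_le ?_ ih x).trans
      (mul_le_mul_of_nonneg_right ?_ (H_pos x).le)
    · rw [div_le_iff₀ (by positivity)]
      linarith [n.cast_nonneg (α := ℝ)]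
    -- `8 / (n + 8)` is a supersolution of `c ↦ c - c² / 8` since `(n + 7)(n + 9) ≤ (n + 8)²`.
    · have : (0 : ℝ) < n + 8 := by positivity
      rw [show (8 : ℝ) / (n + 8) - (8 / (n + 8)) ^ 2 / 8 = 8 * (n + 7) / (n + 8) ^ 2 by
        field_simp; ring, div_le_div_iff₀ (by positivity) (by positivity)]
      push_cast
      nlinarith

lemma Hbar_sub_fseq_succ_le (n : ℕ) (x : ℝ) : Hbar x - fseq (n + 1) x ≤ 8 / (n + 8) :=
  calc Hbar x - fseq (n + 1) x = Hbar x * (1 - exp (-gap (fseq n) x)) :=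
        (admissible_fseq n).Hbar_sub_T x
    _ ≤ 1 * gap (fseq n) x := by
        gcongr
        · exact sub_nonneg.2 (exp_le_one_iff.2 (neg_nonpos.2 ((admissible_fseq n).gap_nonneg x)))
        · exact (Hbar_lt_one x).le
        · linarith [add_one_le_exp (-gap (fseq n) x)]
    _ ≤ 8 / (n + 8) * H x := (one_mul _).trans_le (gap_fseq_le n x)
    _ ≤ 8 / (n + 8) := mul_le_of_le_one_right (by positivity) (H_lt_one x).le

/-- With `f₀ := H̄²` and `f_n := T(f_{n−1})`, the sequence `f_n`
converges pointwise to `H̄`. -/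
theorem stmt14 (x : ℝ) :
    Filter.Tendsto (fun n => fseq n x) Filter.atTop (nhds (Hbar x)) := by
  refine (tendsto_add_atTop_iff_nat 1).1 ?_
  have h8 : Tendsto (fun n : ℕ => 8 / ((n : ℝ) + 8)) atTop (𝓝 0) :=
    tendsto_const_nhds.div_atTop (tendsto_atTop_add_const_right _ 8 tendsto_natCast_atTop_atTop)
  have hlow : Tendsto (fun n : ℕ => Hbar x - 8 / ((n : ℝ) + 8)) atTop (𝓝 (Hbar x)) := by
    simpa using tendsto_const_nhds.sub h8
  exact tendsto_of_tendsto_of_tendsto_of_le_of_le hlow tendsto_const_nhds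
    (fun n => by linarith [Hbar_sub_fseq_succ_le n x]) fun n => (admissible_fseq (n + 1)).le_Hbar x
end
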